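/- Let a > b be positive integers such that |a/b − φ| < |F_{k+2}/F_{k+1} − φ|, where φ is the golden ratio and F_n is the n-th Fibonacci number (F₀ = 0, F₁ = F₂ = 1). Then the length of the Euclidean algorithm applied to (a, b) is at least k. -/

import Mathlib

/-!
The ratios `c n = F (n + 2) / F (n + 1)` satisfy `c (n + 1) = 1 + 1 / c n` and
`c n - φ = ψ ^ (n + 1) / F (n + 1)`, so they approach `φ` from alternating sides at decreasing
distance. If the Euclidean algorithm on `(a, b)` takes `n + 1` steps, then `a / b` does not lie
strictly between `c n` and `c (n + 1)`: for `a ≥ 2 b` because every `c m ≤ 2`, and otherwise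
because `a / b = 1 + 1 / (b / (a - b))`, the pair `(b, a - b)` takes `n` steps, and `t ↦ 1 + 1 / t`
preserves "not strictly between" on positive reals. Since `φ` does lie between `c n` and
`c (n + 1)`, the ratio `a / b` is at least as far from `φ` as `c (n + 1)`, hence as every later `c k`.
-/

/-- Number of division steps of the Euclidean algorithm on `(a, b)`,
with the convention `eucLen n 1 = 1`. -/
def eucLen : ℕ → ℕ → ℕ
  | _, 0 => 0
  | _, 1 => 1
  | a, n + 2 => eucLen (n + 2) (a % (n + 2)) + 1
termination_by _ b => b
decreasing_by exact Nat.mod_lt _ (by omega)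

open Real goldenRatio

lemma eucLen_of_one_lt (a : ℕ) {b : ℕ} (hb : 1 < b) : eucLen a b = eucLen b (a % b) + 1 := by
  obtain ⟨n, rfl⟩ := Nat.exists_eq_add_of_le' hb
  rw [eucLen]

lemma eucLen_pos (a : ℕ) {b : ℕ} (hb : 0 < b) : 0 < eucLen a b := by
  match b, hb with
  | 1, _ => rw [eucLen]; exact one_pos
  | _ + 2, _ => rw [eucLen]; exact Nat.succ_pos _

noncomputable def fibRatio (n : ℕ) : ℝ := Nat.fib (n + 2) / Nat.fib (n + 1)

lemma fib_succ_cast_pos (n : ℕ) : (0 : ℝ) < Nat.fib (n + 1) := by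
  exact_mod_cast Nat.fib_pos.2 n.succ_pos

lemma fibRatio_pos (n : ℕ) : 0 < fibRatio n :=
  div_pos (fib_succ_cast_pos _) (fib_succ_cast_pos _)

lemma fibRatio_le_two (n : ℕ) : fibRatio n ≤ 2 := by
  rw [fibRatio, div_le_iff₀ (fib_succ_cast_pos n)]
  have hfib : Nat.fib (n + 2) ≤ 2 * Nat.fib (n + 1) := by
    rw [Nat.fib_add_two]; linarith [Nat.fib_le_fib_succ (n := n)]
  exact_mod_cast hfib

lemma fibRatio_succ (n : ℕ) : fibRatio (n + 1) = 1 + (fibRatio n)⁻¹ := by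
  have := fib_succ_cast_pos (n + 1)
  rw [fibRatio, fibRatio, Nat.fib_add_two (n := n + 1), inv_div, Nat.cast_add, add_div,
    div_self this.ne', add_comm]

lemma fibRatio_sub_goldenRatio (n : ℕ) : fibRatio n - φ = ψ ^ (n + 1) / Nat.fib (n + 1) := by
  rw [← fib_succ_sub_goldenRatio_mul_fib, fibRatio, sub_div, mul_div_cancel_right₀ _
    (fib_succ_cast_pos n).ne']

lemma antitone_abs_fibRatio_sub_goldenRatio : Antitone fun n ↦ |fibRatio n - φ| := by
  intro m n hmn
  dsimp only
  rw [fibRatio_sub_goldenRatio, fibRatio_sub_goldenRatio, abs_div, abs_div, abs_pow, abs_pow,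
    Nat.abs_cast, Nat.abs_cast]
  have hψ : |ψ| ≤ 1 := abs_le.2 ⟨neg_one_lt_goldenConj.le, goldenConj_neg.le.trans zero_le_one⟩
  exact div_le_div₀ (by positivity) (pow_le_pow_of_le_one (abs_nonneg _) hψ (by omega))
    (fib_succ_cast_pos m) (by exact_mod_cast Nat.fib_mono (by omega))

lemma fibRatio_sub_goldenRatio_mul_succ_nonpos (n : ℕ) :
    (fibRatio n - φ) * (fibRatio (n + 1) - φ) ≤ 0 := by
  rw [fibRatio_sub_goldenRatio, fibRatio_sub_goldenRatio, div_mul_div_comm, ← pow_add]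
  have hodd : Odd (n + 1 + (n + 1 + 1)) := ⟨n + 1, by ring⟩
  exact div_nonpos_of_nonpos_of_nonneg (hodd.pow_neg goldenConj_neg).le (by positivity)

lemma min_abs_sub_le_abs_sub_of_not_between {x u v p : ℝ} (hx : 0 ≤ (x - u) * (x - v))
    (hp : (u - p) * (v - p) ≤ 0) : min |u - p| |v - p| ≤ |x - p| := by
  rcases mul_nonneg_iff.1 hx with ⟨hu, hv⟩ | ⟨hu, hv⟩ <;>
  rcases mul_nonpos_iff.1 hp with ⟨hu', hv'⟩ | ⟨hu', hv'⟩
  · exact min_le_of_left_le (abs_le_abs (by linarith) (by linarith))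
  · exact min_le_of_right_le (abs_le_abs (by linarith) (by linarith))
  · exact min_le_of_right_le (abs_le_abs_of_nonpos (by linarith) (by linarith))
  · exact min_le_of_left_le (abs_le_abs_of_nonpos (by linarith) (by linarith))

lemma inv_sub_mul_inv_sub_nonneg {y u v : ℝ} (hy : 0 < y) (hu : 0 < u) (hv : 0 < v)
    (h : 0 ≤ (y - u) * (y - v)) : 0 ≤ (y⁻¹ - u⁻¹) * (y⁻¹ - v⁻¹) := by
  have : (y⁻¹ - u⁻¹) * (y⁻¹ - v⁻¹) = (y - u) * (y - v) * (y⁻¹ ^ 2 * u⁻¹ * v⁻¹) := by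
    field_simp
    ring
  rw [this]
  positivity

lemma sub_fibRatio_mul_sub_fibRatio_nonneg {x : ℝ} (hx : 2 ≤ x) (m n : ℕ) :
    0 ≤ (x - fibRatio m) * (x - fibRatio n) :=
  mul_nonneg (by linarith [fibRatio_le_two m]) (by linarith [fibRatio_le_two n])

theorem sub_fibRatio_mul_sub_fibRatio_nonneg_of_eucLen_eq {a b n : ℕ} (hb : 0 < b) (hab : b < a)
    (hn : eucLen a b = n + 1) :
    0 ≤ ((a : ℝ) / b - fibRatio n) * ((a : ℝ) / b - fibRatio (n + 1)) := by
  induction b using Nat.strong_induction_on generalizing a n with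
  | _ b ih =>
  have hb' : (0 : ℝ) < b := by exact_mod_cast hb
  rcases le_or_gt (2 * b) a with hquot | hquot
  · refine sub_fibRatio_mul_sub_fibRatio_nonneg ?_ _ _
    rw [le_div_iff₀ hb']
    exact_mod_cast hquot
  obtain ⟨r, rfl⟩ := Nat.exists_eq_add_of_le hab.le
  have hr : 0 < r := by omega
  have hrb : r < b := by omega
  rw [eucLen_of_one_lt _ (by omega), Nat.add_mod_left, Nat.mod_eq_of_lt hrb,
    add_left_inj] at hn
  obtain ⟨m, rfl⟩ := Nat.exists_eq_add_of_le' (hn ▸ eucLen_pos b hr)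
  have hr' : (0 : ℝ) < r := by exact_mod_cast hr
  have hx : ((b + r : ℕ) : ℝ) / b = 1 + ((b : ℝ) / r)⁻¹ := by
    push_cast
    field_simp
  rw [hx, fibRatio_succ, fibRatio_succ (m + 1), add_sub_add_left_eq_sub, add_sub_add_left_eq_sub]
  exact inv_sub_mul_inv_sub_nonneg (div_pos hb' hr') (fibRatio_pos _) (fibRatio_pos _)
    (ih r hrb hr hrb hn)

theorem abs_fibRatio_eucLen_sub_goldenRatio_le {a b : ℕ} (hb : 0 < b) (hab : b < a) :
    |fibRatio (eucLen a b) - φ| ≤ |(a : ℝ) / b - φ| := by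
  obtain ⟨n, hn⟩ := Nat.exists_eq_add_of_le' (eucLen_pos a hb)
  rw [hn]
  calc |fibRatio (n + 1) - φ| = min |fibRatio n - φ| |fibRatio (n + 1) - φ| :=
        (min_eq_right (antitone_abs_fibRatio_sub_goldenRatio n.le_succ)).symm
    _ ≤ |(a : ℝ) / b - φ| := min_abs_sub_le_abs_sub_of_not_between
        (sub_fibRatio_mul_sub_fibRatio_nonneg_of_eucLen_eq hb hab hn)
        (fibRatio_sub_goldenRatio_mul_succ_nonpos n)

theorem stmt5 (a b k : ℕ) (hb : 0 < b) (hab : b < a)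
    (h : |(a : ℝ) / (b : ℝ) - (1 + Real.sqrt 5) / 2| <
      |(Nat.fib (k + 2) : ℝ) / (Nat.fib (k + 1) : ℝ) - (1 + Real.sqrt 5) / 2|) :
    k ≤ eucLen a b := by
  by_contra! hk
  exact h.not_ge ((antitone_abs_fibRatio_sub_goldenRatio hk.le).trans
    (abs_fibRatio_eucLen_sub_goldenRatio_le hb hab))
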